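/- arXiv:2105.08748 — 4 statements merged into one kernel-verified Lean document; each statement's English description precedes it below -/
import Mathlib

section
/- Fix reals μ, ε with 0 < μ−ε < μ < 1 and α ∈ (0,1). Let (X_i)_{i≥1} be i.i.d. Bernoulli(μ_a) random variables with μ_a > μ. Then almost surely Λ_t → ∞ as t → ∞; in particular, almost surely there exists a positive integer t with Λ_t ≥ log(1/α). -/
/-!
Each increment `X_i λ₀ - (1 - X_i) λ₁` of `Λ` is an affine function of `X_i`, so the increments are
i.i.d. and bounded with mean `μ_a λ₀ - (1 - μ_a) λ₁`. This mean is positive: at `μ_a = μ` it is the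
Kullback–Leibler divergence of `Bernoulli(μ - ε)` from `Bernoulli(μ)`, hence nonnegative, and it
increases strictly with `μ_a`. By the strong law of large numbers `Λ_t / t` converges almost surely
to this mean, so `Λ_t → ∞`.
-/
open MeasureTheory ProbabilityTheory Finset Filter Function Real Topology

-- `KL(Bernoulli p ‖ Bernoulli q) ≥ 0`, via `1 - 1/x ≤ log x ≤ x - 1`.
lemma mul_log_div_sub_mul_log_div_nonneg {p q : ℝ} (hq : 0 < q) (hp : 0 < p) (hp1 : p < 1)
    (hq1 : q < 1) : 0 ≤ p * log (p / q) - (1 - p) * log ((1 - q) / (1 - p)) := by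
  have h0 : p - q ≤ p * log (p / q) := by
    have h := one_sub_inv_le_log_of_pos (div_pos hp hq)
    rw [inv_div] at h
    calc p - q = p * (1 - q / p) := by field_simp
      _ ≤ p * log (p / q) := mul_le_mul_of_nonneg_left h hp.le
  have h1 : (1 - p) * log ((1 - q) / (1 - p)) ≤ p - q := by
    have h := log_le_sub_one_of_pos (div_pos (sub_pos.2 hq1) (sub_pos.2 hp1))
    calc (1 - p) * log ((1 - q) / (1 - p)) ≤ (1 - p) * ((1 - q) / (1 - p) - 1) :=
          mul_le_mul_of_nonneg_left h (sub_pos.2 hp1).le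
      _ = p - q := by field_simp [(sub_pos.2 hp1).ne']; ring
  linarith

lemma mul_log_div_sub_mul_log_div_pos {p q a : ℝ} (hq : 0 < q) (hqp : q < p) (hp1 : p < 1)
    (hpa : p < a) : 0 < a * log (p / q) - (1 - a) * log ((1 - q) / (1 - p)) := by
  have hkl := mul_log_div_sub_mul_log_div_nonneg hq (hq.trans hqp) hp1 (hqp.trans hp1)
  have h0 : 0 < log (p / q) := log_pos ((one_lt_div hq).2 hqp)
  have h1 : 0 < log ((1 - q) / (1 - p)) := log_pos ((one_lt_div (by linarith)).2 (by linarith))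
  have hsplit : a * log (p / q) - (1 - a) * log ((1 - q) / (1 - p)) =
      (p * log (p / q) - (1 - p) * log ((1 - q) / (1 - p)))
        + (a - p) * (log (p / q) + log ((1 - q) / (1 - p))) := by ring
  rw [hsplit]
  exact add_pos_of_nonneg_of_pos hkl (mul_pos (sub_pos.2 hpa) (add_pos h0 h1))

lemma tendsto_sum_range_atTop_of_tendsto_div {y : ℕ → ℝ} {m : ℝ} (hm : 0 < m)
    (h : Tendsto (fun n : ℕ => (∑ i ∈ range n, y i) / n) atTop (𝓝 m)) :
    Tendsto (fun n => ∑ i ∈ range n, y i) atTop atTop := by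
  refine (tendsto_natCast_atTop_atTop.atTop_mul_pos hm h).congr' ?_
  filter_upwards [eventually_ne_atTop 0] with n hn
  field_simp

lemma eq_indicator_of_forall_eq_zero_or_eq_one {Ω : Type*} {X : Ω → ℝ}
    (h01 : ∀ ω, X ω = 0 ∨ X ω = 1) : X = {ω | X ω = 1}.indicator 1 := by
  ext ω
  rcases h01 ω with h | h <;> simp [h]

section

variable {Ω : Type*} [MeasurableSpace Ω] {P : Measure Ω} {X : Ω → ℝ}

lemma map_eq_of_forall_eq_zero_or_eq_one (hX : Measurable X) (h01 : ∀ ω, X ω = 0 ∨ X ω = 1) :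
    P.map X = P {ω | X ω = 1} • Measure.dirac 1 + P {ω | X ω = 0} • Measure.dirac 0 := by
  ext s hs
  have hsplit : X ⁻¹' s = {ω | X ω = 1 ∧ (1 : ℝ) ∈ s} ∪ {ω | X ω = 0 ∧ (0 : ℝ) ∈ s} := by
    ext ω
    rcases h01 ω with h | h <;> simp [h]
  have hdisj : Disjoint {ω | X ω = 1 ∧ (1 : ℝ) ∈ s} {ω | X ω = 0 ∧ (0 : ℝ) ∈ s} :=
    Set.disjoint_left.2 fun ω h h' => by simp_all
  rw [Measure.map_apply hX hs, hsplit, measure_union hdisj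
    ((hX (measurableSet_singleton 0)).inter (.const _))]
  by_cases h1 : (1 : ℝ) ∈ s <;> by_cases h0 : (0 : ℝ) ∈ s <;>
    simp [h1, h0, Measure.dirac_apply' _ hs]

lemma integrable_of_forall_eq_zero_or_eq_one [IsFiniteMeasure P] (hX : Measurable X)
    (h01 : ∀ ω, X ω = 0 ∨ X ω = 1) : Integrable X P := by
  rw [eq_indicator_of_forall_eq_zero_or_eq_one h01]
  exact (integrable_const 1).indicator (hX (measurableSet_singleton 1))

lemma integral_of_forall_eq_zero_or_eq_one (hX : Measurable X) (h01 : ∀ ω, X ω = 0 ∨ X ω = 1) :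
    P[X] = P.real {ω | X ω = 1} := by
  nth_rw 1 [eq_indicator_of_forall_eq_zero_or_eq_one h01]
  exact integral_indicator_one (hX (measurableSet_singleton 1))

lemma identDistrib_of_forall_eq_zero_or_eq_one [IsProbabilityMeasure P] {Y : Ω → ℝ}
    (hX : Measurable X) (hY : Measurable Y) (hX01 : ∀ ω, X ω = 0 ∨ X ω = 1)
    (hY01 : ∀ ω, Y ω = 0 ∨ Y ω = 1) (h : P {ω | X ω = 1} = P {ω | Y ω = 1}) :
    IdentDistrib X Y P P := by
  have hcompl {Z : Ω → ℝ} (h01 : ∀ ω, Z ω = 0 ∨ Z ω = 1) : {ω | Z ω = 0} = {ω | Z ω = 1}ᶜ := by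
    ext ω
    rcases h01 ω with h | h <;> simp [h]
  have hXm : MeasurableSet {ω | X ω = 1} := hX (measurableSet_singleton 1)
  have hYm : MeasurableSet {ω | Y ω = 1} := hY (measurableSet_singleton 1)
  have h0 : P {ω | X ω = 0} = P {ω | Y ω = 0} := by
    rw [hcompl hX01, hcompl hY01, prob_compl_eq_one_sub hXm, prob_compl_eq_one_sub hYm, h]
  refine ⟨hX.aemeasurable, hY.aemeasurable, ?_⟩
  rw [map_eq_of_forall_eq_zero_or_eq_one hX hX01, map_eq_of_forall_eq_zero_or_eq_one hY hY01, h, h0]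

lemma integral_mul_const_sub_one_sub_mul_const [IsProbabilityMeasure P] (hX : Integrable X P) (a b : ℝ) :
    ∫ ω, (X ω * a - (1 - X ω) * b) ∂P = P[X] * a - (1 - P[X]) * b := by
  have h1 : Integrable (fun ω => (1 - X ω) * b) P := ((integrable_const 1).sub hX).mul_const b
  rw [integral_sub (hX.mul_const a) h1, integral_mul_const, integral_mul_const, integral_sub (integrable_const 1) hX]
  simp

lemma ae_tendsto_sum_range_atTop {Y : ℕ → Ω → ℝ}
    (hint : Integrable (Y 0) P) (hindep : Pairwise ((· ⟂ᵢ[P] ·) on Y))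
    (hident : ∀ i, IdentDistrib (Y i) (Y 0) P P) (hmean : 0 < P[Y 0]) :
    ∀ᵐ ω ∂P, Tendsto (fun n => ∑ i ∈ range n, Y i ω) atTop atTop := by
  filter_upwards [strong_law_ae_real Y hint hindep hident] with ω hω
  exact tendsto_sum_range_atTop_of_tendsto_div hmean hω

end

theorem stmt_3_general {Ω : Type*} [MeasurableSpace Ω] (P : Measure Ω) [IsProbabilityMeasure P]
    (μ ε α μa : ℝ) (hε : 0 < ε) (hμε : 0 < μ - ε) (hμ : μ < 1)
    (hμa : μ < μa)
    (X : ℕ → Ω → ℝ)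
    (hmeas : ∀ i, Measurable (X i))
    (h01 : ∀ i ω, X i ω = 0 ∨ X i ω = 1)
    (hindep : iIndepFun X P)
    (hdist : ∀ i, P {ω | X i ω = 1} = ENNReal.ofReal μa) :
    ∀ᵐ ω ∂P,
      Tendsto
        (fun t => ∑ i ∈ range t,
          (X i ω * Real.log (μ / (μ - ε))
            - (1 - X i ω) * Real.log ((1 - μ + ε) / (1 - μ)))) atTop atTop
      ∧ ∃ t : ℕ, 1 ≤ t ∧
          Real.log (1 / α) ≤ ∑ i ∈ range t,
            (X i ω * Real.log (μ / (μ - ε))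
              - (1 - X i ω) * Real.log ((1 - μ + ε) / (1 - μ))) := by
  set f : ℝ → ℝ := fun x => x * log (μ / (μ - ε)) - (1 - x) * log ((1 - μ + ε) / (1 - μ))
  have hf : Measurable f := by fun_prop
  have hident : ∀ i, IdentDistrib (X i) (X 0) P P := fun i =>
    identDistrib_of_forall_eq_zero_or_eq_one (hmeas i) (hmeas 0) (h01 i) (h01 0)
      (by rw [hdist, hdist])
  have hint : Integrable (X 0) P := integrable_of_forall_eq_zero_or_eq_one (hmeas 0) (h01 0)
  have hmean : P[X 0] = μa := by
    rw [integral_of_forall_eq_zero_or_eq_one (hmeas 0) (h01 0), measureReal_def, hdist,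
      ENNReal.toReal_ofReal (by linarith)]
  have hdrift : 0 < P[f ∘ X 0] := by
    rw [comp_def, integral_mul_const_sub_one_sub_mul_const hint, hmean]
    simpa only [show 1 - (μ - ε) = 1 - μ + ε by ring]
      using mul_log_div_sub_mul_log_div_pos hμε (sub_lt_self μ hε) hμ hμa
  have hint_f : Integrable (f ∘ X 0) P :=
    (hint.mul_const _).sub (((integrable_const 1).sub hint).mul_const _)
  filter_upwards [ae_tendsto_sum_range_atTop (Y := fun i => f ∘ X i) hint_f
    (fun i j hij => (hindep.indepFun hij).comp hf hf) (fun i => (hident i).comp hf) hdrift]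
    with ω hω
  exact ⟨hω, ((hω.eventually_ge_atTop _).and (eventually_ge_atTop 1)).exists.imp
    fun _ ht => ⟨ht.2, ht.1⟩⟩

/-- Lemma 2(i): for i.i.d. `Bernoulli(μ_a)` samples with `μ_a > μ`, the log-likelihood ratio
`Λ_t = ∑_{i<t} (X_i·λ₀ − (1−X_i)·λ₁)` tends to `∞` almost surely; in particular, almost surely
there is a positive integer `t` with `Λ_t ≥ log(1/α)`. -/
theorem stmt_3 {Ω : Type*} [MeasurableSpace Ω] (P : Measure Ω) [IsProbabilityMeasure P]
    (μ ε α μa : ℝ) (hε : 0 < ε) (hμε : 0 < μ - ε) (hμ : μ < 1)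
    (hα : α ∈ Set.Ioo (0 : ℝ) 1) (hμa : μ < μa) (hμa1 : μa ≤ 1)
    (X : ℕ → Ω → ℝ)
    (hmeas : ∀ i, Measurable (X i))
    (h01 : ∀ i ω, X i ω = 0 ∨ X i ω = 1)
    (hindep : iIndepFun X P)
    (hdist : ∀ i, P {ω | X i ω = 1} = ENNReal.ofReal μa) :
    ∀ᵐ ω ∂P,
      Tendsto
        (fun t => ∑ i ∈ range t,
          (X i ω * Real.log (μ / (μ - ε))
            - (1 - X i ω) * Real.log ((1 - μ + ε) / (1 - μ)))) atTop atTop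
      ∧ ∃ t : ℕ, 1 ≤ t ∧
          Real.log (1 / α) ≤ ∑ i ∈ range t,
            (X i ω * Real.log (μ / (μ - ε))
              - (1 - X i ω) * Real.log ((1 - μ + ε) / (1 - μ))) :=
  stmt_3_general P μ ε α μa hε hμε hμ hμa X hmeas h01 hindep hdist
end

section
/- Fix reals μ, ε with 0 < μ−ε < μ < 1 and α ∈ (0,1). Let (X_i)_{i≥1} be i.i.d. Bernoulli(μ_a) random variables with μ_a ≤ μ−ε. Then P(Λ_t < log(1/α) for all t ≥ 1) ≥ 1 − α. -/
/-!
`exp Λ_t` is the product of the independent likelihood-ratio factors `exp (X_i λ₀ - (1 - X_i) λ₁)`,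
each of mean at most one when `μ_a ≤ μ - ε`. Adding to each factor the constant by which its mean
falls short of one turns this product into a dominating nonnegative product martingale of mean one,
and Doob's maximal inequality (Ville's inequality) bounds the probability that it ever reaches
`1 / α` by `α`.
-/

open MeasureTheory ProbabilityTheory Finset
open scoped ENNReal NNReal

namespace MeasureTheory
variable {Ω : Type*} [MeasurableSpace Ω] {P : Measure Ω} [IsFiniteMeasure P]

theorem Martingale.mul_measure_exists_le {f : ℕ → Ω → ℝ} {ℱ : Filtration ℕ ‹MeasurableSpace Ω›}
    (hf : Martingale f ℱ P) (hnonneg : 0 ≤ f) (c : ℝ≥0) :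
    c * P {ω | ∃ n, (c : ℝ) ≤ f n ω} ≤ ENNReal.ofReal (P[f 0]) := by
  set B : ℕ → Set Ω := fun n =>
    {ω | (c : ℝ) ≤ (range (n + 1)).sup' nonempty_range_add_one fun k => f k ω}
  have hB : ∀ n, c * P (B n) ≤ ENNReal.ofReal (P[f 0]) := fun n => by
    refine (maximal_ineq hf.submartingale hnonneg n).trans (ENNReal.ofReal_le_ofReal ?_)
    calc ∫ ω in B n, f n ω ∂P ≤ ∫ ω, f n ω ∂P :=
          setIntegral_le_integral (hf.integrable n) (.of_forall fun ω => hnonneg n ω)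
      _ = P[f 0] := by
          simpa using (hf.setIntegral_eq n.zero_le MeasurableSet.univ).symm
  have hunion : {ω | ∃ n, (c : ℝ) ≤ f n ω} = ⋃ n, B n := by
    ext ω
    simp only [Set.mem_ofPred_eq, Set.mem_iUnion, B, le_sup'_iff, mem_range]
    exact ⟨fun ⟨n, hn⟩ => ⟨n, n, n.lt_succ_self, hn⟩, fun ⟨_, k, _, hk⟩ => ⟨k, hk⟩⟩
  have hmono : Monotone B := fun m n hmn ω hω => by
    simp only [Set.mem_ofPred_eq, B, le_sup'_iff, mem_range] at hω ⊢
    obtain ⟨k, hk, hck⟩ := hω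
    exact ⟨k, by omega, hck⟩
  rw [hunion, hmono.measure_iUnion, ENNReal.mul_iSup]
  exact iSup_le hB

end MeasureTheory

namespace ProbabilityTheory
variable {Ω : Type*} [MeasurableSpace Ω] {P : Measure Ω} [IsProbabilityMeasure P]
  {Y : ℕ → Ω → ℝ}

theorem iIndepFun.integrable_prod (hmeas : ∀ i, Measurable (Y i))
    (hind : iIndepFun Y P) (hint : ∀ i, Integrable (Y i) P) (s : Finset ℕ) :
    Integrable (∏ i ∈ s, Y i) P := by
  induction s using Finset.induction_on with
  | empty => exact integrable_const 1
  | insert i s hi ih =>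
    rw [prod_insert hi, mul_comm]
    exact (hind.indepFun_finsetProd_of_notMem hmeas hi).integrable_mul ih (hint i)

theorem iIndepFun.martingale_prod_range_succ (hmeas : ∀ i, Measurable (Y i))
    (hind : iIndepFun Y P) (hint : ∀ i, Integrable (Y i) P) (hmean : ∀ i, P[Y i] = 1) :
    Martingale (fun n => ∏ i ∈ range (n + 1), Y i)
      (Filtration.natural Y fun i => (hmeas i).stronglyMeasurable) P := by
  have hYadapted := Filtration.stronglyAdapted_natural fun i => (hmeas i).stronglyMeasurable
  have hadapted : StronglyAdapted (Filtration.natural Y fun i => (hmeas i).stronglyMeasurable)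
      (fun n => ∏ i ∈ range (n + 1), Y i) := fun n =>
    Finset.stronglyMeasurable_prod _ fun i hi =>
      (hYadapted i).mono (Filtration.mono _ (by simpa [Nat.lt_succ_iff] using hi))
  refine martingale_nat hadapted (fun n => hind.integrable_prod hmeas hint _) fun n => ?_
  have hint_succ := hind.integrable_prod hmeas hint (range (n + 2))
  rw [prod_range_succ] at hint_succ
  rw [prod_range_succ _ (n + 1)]
  filter_upwards [condExp_mul_of_stronglyMeasurable_left (hadapted n) hint_succ (hint (n + 1)),
    hind.condExp_natural_ae_eq_of_lt (fun i => (hmeas i).stronglyMeasurable) n.lt_succ_self]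
    with ω h1 h2
  simp [h1, h2, hmean]

theorem iIndepFun.mul_measure_exists_le_prod (hmeas : ∀ i, Measurable (Y i))
    (hind : iIndepFun Y P) (hint : ∀ i, Integrable (Y i) P) (hnonneg : ∀ i ω, 0 ≤ Y i ω)
    (hmean : ∀ i, P[Y i] ≤ 1) (c : ℝ≥0) :
    c * P {ω | ∃ n, (c : ℝ) ≤ ∏ i ∈ range (n + 1), Y i ω} ≤ 1 := by
  set Z : ℕ → Ω → ℝ := fun i ω => Y i ω + (1 - P[Y i])
  have hZmeas : ∀ i, Measurable (Z i) := fun i => (hmeas i).add_const _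
  have hZind : iIndepFun Z P :=
    hind.comp (fun i (x : ℝ) => x + (1 - ∫ ω, Y i ω ∂P)) fun i => measurable_id.add_const _
  have hZint : ∀ i, Integrable (Z i) P := fun i => (hint i).add (integrable_const _)
  have hZmean : ∀ i, P[Z i] = 1 := fun i => by
    simp [Z, integral_add (hint i) (integrable_const _)]
  have hYZ : ∀ i ω, Y i ω ≤ Z i ω := fun i ω => le_add_of_nonneg_right (sub_nonneg.2 (hmean i))
  have hprod_le : ∀ n ω, ∏ i ∈ range (n + 1), Y i ω ≤ ∏ i ∈ range (n + 1), Z i ω :=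
    fun n ω => prod_le_prod (fun i _ => hnonneg i ω) fun i _ => hYZ i ω
  have hZnonneg : 0 ≤ fun n => ∏ i ∈ range (n + 1), Z i := fun n ω => by
    simpa [prod_apply] using prod_nonneg fun i _ => (hnonneg i ω).trans (hYZ i ω)
  calc c * P {ω | ∃ n, (c : ℝ) ≤ ∏ i ∈ range (n + 1), Y i ω}
      ≤ c * P {ω | ∃ n, (c : ℝ) ≤ (∏ i ∈ range (n + 1), Z i) ω} := by
        gcongr
        simpa [prod_apply] using hprod_le _ _
    _ ≤ ENNReal.ofReal (P[∏ i ∈ range 1, Z i]) :=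
        (hZind.martingale_prod_range_succ hZmeas hZint hZmean).mul_measure_exists_le hZnonneg c
    _ = 1 := by simp [hZmean]

theorem iIndepFun.one_sub_le_measure_forall_sum_lt_log {S : ℕ → Ω → ℝ}
    (hmeas : ∀ i, Measurable (S i)) (hind : iIndepFun S P)
    (hint : ∀ i, Integrable (fun ω => Real.exp (S i ω)) P)
    (hmean : ∀ i, ∫ ω, Real.exp (S i ω) ∂P ≤ 1) {α : ℝ} (hα : 0 < α) :
    1 - ENNReal.ofReal α ≤
      P {ω | ∀ t, 1 ≤ t → ∑ i ∈ range t, S i ω < Real.log (1 / α)} := by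
  set A := {ω | ∃ n, (α⁻¹.toNNReal : ℝ) ≤ ∏ i ∈ range (n + 1), Real.exp (S i ω)}
  have hA : P A ≤ ENNReal.ofReal α := by
    have := (hind.comp (fun _ => Real.exp) fun _ => Real.measurable_exp).mul_measure_exists_le_prod
      (fun i => (hmeas i).exp) hint (fun i ω => (S i ω).exp_nonneg) hmean α⁻¹.toNNReal
    rwa [mul_comm, ← ENNReal.le_inv_iff_mul_le, ← ENNReal.ofReal.eq_def,
      ENNReal.ofReal_inv_of_pos hα, inv_inv] at this
  have hsub : Aᶜ ⊆ {ω | ∀ t, 1 ≤ t → ∑ i ∈ range t, S i ω < Real.log (1 / α)} := by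
    intro ω hω t ht
    obtain ⟨n, rfl⟩ := Nat.exists_eq_add_of_le' ht
    simp only [A, Set.mem_compl_iff, Set.mem_ofPred_eq, not_exists, not_le] at hω
    rw [Real.lt_log_iff_exp_lt (by positivity), Real.exp_sum]
    simpa [hα.le] using hω n
  calc 1 - ENNReal.ofReal α ≤ P Set.univ - P A := by rw [measure_univ]; gcongr
    _ ≤ P Aᶜ := by simpa only [Set.compl_eq_univ_sdiff] using le_measure_sdiff
    _ ≤ _ := measure_mono hsub

end ProbabilityTheory

namespace MeasureTheory
variable {Ω : Type*} {X : Ω → ℝ}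

theorem eq_indicator_one_of_eq_zero_or_eq_one (h01 : ∀ ω, X ω = 0 ∨ X ω = 1) :
    X = {ω | X ω = 1}.indicator 1 :=
  funext fun ω => by rcases h01 ω with h | h <;> simp [h]

variable [MeasurableSpace Ω] {P : Measure Ω}

theorem integrable_of_eq_zero_or_eq_one [IsFiniteMeasure P] (hX : Measurable X)
    (h01 : ∀ ω, X ω = 0 ∨ X ω = 1) : Integrable X P := by
  rw [eq_indicator_one_of_eq_zero_or_eq_one h01]
  exact (integrable_const 1).indicator (hX (measurableSet_singleton 1))

theorem integral_eq_measureReal_of_eq_zero_or_eq_one (hX : Measurable X)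
    (h01 : ∀ ω, X ω = 0 ∨ X ω = 1) : ∫ ω, X ω ∂P = P.real {ω | X ω = 1} := by
  conv_lhs => rw [eq_indicator_one_of_eq_zero_or_eq_one h01]
  exact integral_indicator_one (hX (measurableSet_singleton 1))

end MeasureTheory

theorem Real.exp_mul_log_sub_mul_log_of_eq_zero_or_eq_one {x p q : ℝ} (hx : x = 0 ∨ x = 1)
    (hp : 0 < p) (hq : 0 < q) :
    Real.exp (x * Real.log p - (1 - x) * Real.log q) = q⁻¹ + (p - q⁻¹) * x := by
  rcases hx with rfl | rfl
  · simp [Real.exp_neg, Real.exp_log hq]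
  · simp [Real.exp_log hp]

-- Equality holds at the null `μa = μ - ε`, and the left side increases with `μa`.
theorem bernoulli_likelihoodRatio_mean_le_one {μ ε μa : ℝ} (hε : 0 < ε) (hμε : 0 < μ - ε)
    (hμ : μ < 1) (hμa : μa ≤ μ - ε) :
    ((1 - μ + ε) / (1 - μ))⁻¹ + (μ / (μ - ε) - ((1 - μ + ε) / (1 - μ))⁻¹) * μa ≤ 1 := by
  have h1μ : 0 < 1 - μ := by linarith
  have h1με : 0 < 1 - μ + ε := by linarith
  have hnull : ((1 - μ + ε) / (1 - μ))⁻¹ +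
      (μ / (μ - ε) - ((1 - μ + ε) / (1 - μ))⁻¹) * (μ - ε) = 1 := by
    field_simp
    ring
  have hincr : ((1 - μ + ε) / (1 - μ))⁻¹ ≤ μ / (μ - ε) := by
    rw [inv_div, div_le_div_iff₀ h1με hμε]
    nlinarith
  nlinarith

/-- Lemma 2(ii): for i.i.d. `Bernoulli(μ_a)` samples with `μ_a ≤ μ−ε`, the probability that
the log-likelihood ratio stays below `log(1/α)` for all `t ≥ 1` is at least `1 − α`. -/
theorem stmt_8 {Ω : Type*} [MeasurableSpace Ω] (P : Measure Ω) [IsProbabilityMeasure P]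
    (μ ε α μa : ℝ) (hε : 0 < ε) (hμε : 0 < μ - ε) (hμ : μ < 1)
    (hα : α ∈ Set.Ioo (0 : ℝ) 1)
    (hμa0 : 0 ≤ μa) (hμa : μa ≤ μ - ε)
    (X : ℕ → Ω → ℝ)
    (hmeas : ∀ i, Measurable (X i))
    (h01 : ∀ i ω, X i ω = 0 ∨ X i ω = 1)
    (hindep : iIndepFun X P)
    (hdist : ∀ i, P {ω | X i ω = 1} = ENNReal.ofReal μa) :
    1 - ENNReal.ofReal α ≤
      P {ω | ∀ t : ℕ, 1 ≤ t →
        ∑ i ∈ range t,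
          (X i ω * Real.log (μ / (μ - ε))
            - (1 - X i ω) * Real.log ((1 - μ + ε) / (1 - μ))) < Real.log (1 / α)} := by
  set p := μ / (μ - ε)
  set q := (1 - μ + ε) / (1 - μ)
  have hfactor : ∀ i, (fun ω => Real.exp (X i ω * Real.log p - (1 - X i ω) * Real.log q)) =
      fun ω => q⁻¹ + (p - q⁻¹) * X i ω := fun i => funext fun ω =>
    Real.exp_mul_log_sub_mul_log_of_eq_zero_or_eq_one (h01 i ω) (div_pos (by linarith) hμε)
      (div_pos (by linarith) (by linarith))
  have hXint : ∀ i, Integrable (X i) P := fun i => integrable_of_eq_zero_or_eq_one (hmeas i) (h01 i)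
  have hXmean : ∀ i, ∫ ω, X i ω ∂P = μa := fun i => by
    rw [integral_eq_measureReal_of_eq_zero_or_eq_one (hmeas i) (h01 i), measureReal_def, hdist,
      ENNReal.toReal_ofReal hμa0]
  refine iIndepFun.one_sub_le_measure_forall_sum_lt_log
    (S := fun i ω => X i ω * Real.log p - (1 - X i ω) * Real.log q) (fun i => by fun_prop)
    (hindep.comp (fun _ x => x * Real.log p - (1 - x) * Real.log q) fun _ => by fun_prop)
    (fun i => ?_) (fun i => ?_) hα.1
  · rw [hfactor i]
    exact (integrable_const _).add ((hXint i).const_mul _)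
  · rw [hfactor i, integral_add (integrable_const _) ((hXint i).const_mul _), integral_const,
      integral_const_mul, hXmean]
    simpa [p, q] using bernoulli_likelihoodRatio_mean_le_one hε hμε hμ hμa
end

section
/- Fix reals μ, ε with 0 < μ−ε < μ < 1 and α ∈ (0,1). Let t be a positive integer and k an integer with 0 ≤ k ≤ t. If k·log(μ/(μ−ε)) + (k − t)·log((1−μ+ε)/(1−μ)) ≥ log(1/α), then k/t ≥ μ − ε. -/
/-!
Write `p = μ - ε` and `q = μ`. The bounds `log x ≤ x - 1` and `1 - 1/x ≤ log x` give
`λ₀ ≤ (q - p) / p` and `λ₁ ≥ (q - p) / (1 - p)`, and since `k ≥ 0` and `k - t ≤ 0` this yields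
`k λ₀ + (k - t) λ₁ ≤ (q - p) (k - t p) / (p (1 - p))`.
The threshold `log (1/α)` is positive, so `k > t p`.
-/

open Real

namespace Real

lemma log_div_le_sub_div {a b : ℝ} (ha : 0 < a) (hb : 0 < b) : log (a / b) ≤ (a - b) / b := by
  calc log (a / b) ≤ a / b - 1 := log_le_sub_one_of_pos (div_pos ha hb)
    _ = (a - b) / b := by field_simp

lemma sub_div_le_log_div {a b : ℝ} (ha : 0 < a) (hb : 0 < b) : (a - b) / a ≤ log (a / b) := by
  calc (a - b) / a = 1 - (a / b)⁻¹ := by field_simp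
    _ ≤ log (a / b) := one_sub_inv_le_log_of_pos (div_pos ha hb)

end Real

noncomputable def bernoulliLLR (p q t k : ℝ) : ℝ :=
  k * log (q / p) + (k - t) * log ((1 - p) / (1 - q))

lemma bernoulliLLR_le {p q t k : ℝ} (hp : 0 < p) (hp₁ : p < 1) (hq : 0 < q) (hq₁ : q < 1)
    (hk : 0 ≤ k) (hkt : k ≤ t) :
    bernoulliLLR p q t k ≤ (q - p) * (k - t * p) / (p * (1 - p)) := by
  have hlog₀ : log (q / p) ≤ (q - p) / p := log_div_le_sub_div hq hp
  have hlog₁ : (q - p) / (1 - p) ≤ log ((1 - p) / (1 - q)) := by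
    simpa using sub_div_le_log_div (sub_pos.2 hp₁) (sub_pos.2 hq₁)
  have hp' : 1 - p ≠ 0 := (sub_pos.2 hp₁).ne'
  calc bernoulliLLR p q t k
      ≤ k * ((q - p) / p) + (k - t) * ((q - p) / (1 - p)) :=
        add_le_add (mul_le_mul_of_nonneg_left hlog₀ hk)
          (mul_le_mul_of_nonpos_left hlog₁ (sub_nonpos.2 hkt))
    _ = (q - p) * (k - t * p) / (p * (1 - p)) := by field_simp; ring

lemma mul_lt_of_bernoulliLLR_pos {p q t k : ℝ} (hp : 0 < p) (hpq : p < q) (hq₁ : q < 1)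
    (hk : 0 ≤ k) (hkt : k ≤ t) (hpos : 0 < bernoulliLLR p q t k) : t * p < k := by
  have hbound := bernoulliLLR_le hp (hpq.trans hq₁) (hp.trans hpq) hq₁ hk hkt
  have hden : 0 < p * (1 - p) := mul_pos hp (by linarith)
  have : 0 < (q - p) * (k - t * p) :=
    (div_pos_iff_of_pos_right hden).1 (hpos.trans_le hbound)
  linarith [(pos_iff_pos_of_mul_pos this).1 (sub_pos.2 hpq)]

theorem stmt_9_general (μ ε α : ℝ) (hε : 0 < ε) (hμε : 0 < μ - ε) (hμ : μ < 1)
    (hα : α ∈ Set.Ioo (0 : ℝ) 1)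
    (t k : ℕ) (hk : k ≤ t)
    (h : Real.log (1 / α) ≤
      (k : ℝ) * Real.log (μ / (μ - ε))
        + ((k : ℝ) - (t : ℝ)) * Real.log ((1 - μ + ε) / (1 - μ))) :
    μ - ε ≤ (k : ℝ) / (t : ℝ) := by
  have hllr : bernoulliLLR (μ - ε) μ t k = (k : ℝ) * log (μ / (μ - ε))
      + ((k : ℝ) - (t : ℝ)) * log ((1 - μ + ε) / (1 - μ)) := by
    rw [bernoulliLLR, ← sub_add]
  have hpos : 0 < bernoulliLLR (μ - ε) μ t k :=
    hllr ▸ (log_pos (one_lt_one_div hα.1 hα.2)).trans_le h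
  have hkt : (k : ℝ) ≤ t := by exact_mod_cast hk
  have hlt := mul_lt_of_bernoulliLLR_pos hμε (by linarith) hμ k.cast_nonneg hkt hpos
  have ht : (0 : ℝ) < t := by nlinarith
  exact (le_div_iff₀ ht).2 (by linarith)

/-- If the log-likelihood ratio `k·λ₀ + (k−t)·λ₁` after `t` samples with `k` ones reaches the
threshold `log(1/α)`, then the empirical frequency satisfies `k/t ≥ μ − ε`. -/
theorem stmt_9 (μ ε α : ℝ) (hε : 0 < ε) (hμε : 0 < μ - ε) (hμ : μ < 1)
    (hα : α ∈ Set.Ioo (0 : ℝ) 1)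
    (t k : ℕ) (ht : 1 ≤ t) (hk : k ≤ t)
    (h : Real.log (1 / α) ≤
      (k : ℝ) * Real.log (μ / (μ - ε))
        + ((k : ℝ) - (t : ℝ)) * Real.log ((1 - μ + ε) / (1 - μ))) :
    μ - ε ≤ (k : ℝ) / (t : ℝ) :=
  stmt_9_general μ ε α hε hμε hμ hα t k hk h
end

section
/- Let K ≥ M ≥ 1 be integers, α ∈ (0,1), and fix reals μ, ε with 0 < μ−ε < μ < 1. Let (Ω, F, P) be a probability space with a filtration (F_t)_{t≥1}, let T be a stopping time with E[T] < ∞, and let (A_t)_{t≥1} be events with A_t ∈ F_t such that for every t ≥ 1, P(A_t | F_{t−1}) ≥ 1/(K−M+1) almost surely on {T ≥ t}. If moreover E[∑_{t=1}^T 1_{A_t}] ≤ M·(1 + log(1/α)/kl(μ, μ−ε)), then E[T] ≤ M·(K−M+1)·(1 + log(1/α)/kl(μ, μ−ε)). -/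
/-!
Write `{t < T}` for the event that step `t + 1` happens. It is `ℱ t`-measurable, so integrating
the conditional probability bound over it gives `P(A (t+1) ∩ {t < T}) ≥ P{t < T} / (K - M + 1)`.
Summing over `t` turns the left side into `E[#{t ∈ [1, T] : ω ∈ A t}]`, and
the right side into `E[T] / (K - M + 1)`.
-/

open MeasureTheory ProbabilityTheory Finset
open scoped ENNReal

section

variable {Ω : Type*} {m m0 : MeasurableSpace Ω}

theorem ofReal_mul_measure_le_measure_inter_of_le_condExp
    (hm : m ≤ m0) (P : Measure Ω) [IsFiniteMeasure P] {A B : Set Ω} {p : ℝ}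
    (hA : MeasurableSet A) (hB : MeasurableSet[m] B)
    (hp : ∀ᵐ ω ∂P, ω ∈ B → p ≤ P[A.indicator (fun _ => (1 : ℝ)) | m] ω) :
    ENNReal.ofReal p * P B ≤ P (A ∩ B) := by
  have hint : Integrable (A.indicator fun _ => (1 : ℝ)) P := (integrable_const 1).indicator hA
  have hreal : p * P.real B ≤ P.real (A ∩ B) :=
    calc p * P.real B = ∫ _ in B, p ∂P := by rw [setIntegral_const, smul_eq_mul, mul_comm]
      _ ≤ ∫ ω in B, P[A.indicator (fun _ => (1 : ℝ)) | m] ω ∂P :=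
        setIntegral_mono_ae_restrict (integrableOn_const (measure_ne_top _ _))
          integrable_condExp.integrableOn ((ae_restrict_iff' (hm B hB)).2 hp)
      _ = ∫ ω in B, A.indicator (fun _ => (1 : ℝ)) ω ∂P := setIntegral_condExp hm hint hB
      _ = P.real (A ∩ B) := by
        rw [integral_indicator_const _ hA, measureReal_restrict_apply hA, smul_eq_mul, mul_one]
  calc ENNReal.ofReal p * P B = ENNReal.ofReal (p * P.real B) := by
        rw [ENNReal.ofReal_mul' measureReal_nonneg, ofReal_measureReal]
    _ ≤ ENNReal.ofReal (P.real (A ∩ B)) := ENNReal.ofReal_le_ofReal hreal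
    _ = P (A ∩ B) := ofReal_measureReal

theorem lintegral_sum_range_eq_tsum_setLIntegral (P : Measure Ω) (T : Ω → ℕ)
    (hT : ∀ t, MeasurableSet {ω | t < T ω}) (f : ℕ → Ω → ℝ≥0∞) (hf : ∀ t, Measurable (f t)) :
    ∫⁻ ω, ∑ t ∈ range (T ω), f t ω ∂P = ∑' t, ∫⁻ ω in {ω | t < T ω}, f t ω ∂P := by
  have hpt : ∀ ω, ∑ t ∈ range (T ω), f t ω = ∑' t, {ω | t < T ω}.indicator (f t) ω := by
    intro ω
    rw [sum_eq_tsum_indicator]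
    refine tsum_congr fun t => ?_
    by_cases ht : t < T ω <;> simp [ht]
  simp_rw [hpt, ← lintegral_indicator (hT _)]
  exact lintegral_tsum fun t => ((hf t).indicator (hT t)).aemeasurable

theorem sum_Icc_one_eq_sum_range {M : Type*} [AddCommMonoid M] (f : ℕ → M) (n : ℕ) :
    ∑ t ∈ Icc 1 n, f t = ∑ t ∈ range n, f (t + 1) := by
  rw [range_eq_Ico, sum_Ico_add' f 0 n 1]
  rfl

theorem ofReal_mul_lintegral_le_lintegral_sum_indicator (P : Measure Ω) [IsFiniteMeasure P]
    (ℱ : Filtration ℕ m0) (T : Ω → ℕ) (hT : IsStoppingTime ℱ (fun ω => (T ω : WithTop ℕ)))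
    (A : ℕ → Set Ω) (hA : ∀ t : ℕ, 1 ≤ t → MeasurableSet[ℱ t] (A t)) {p : ℝ}
    (hcond : ∀ t : ℕ, 1 ≤ t →
      ∀ᵐ ω ∂P, t ≤ T ω → p ≤ (P[(A t).indicator (fun _ => (1 : ℝ)) | ℱ (t - 1)]) ω) :
    ENNReal.ofReal p * ∫⁻ ω, (T ω : ℝ≥0∞) ∂P ≤
      ∫⁻ ω, ∑ t ∈ Icc 1 (T ω), (A t).indicator (fun _ => (1 : ℝ≥0∞)) ω ∂P := by
  have hlt : ∀ t, MeasurableSet[ℱ t] {ω | t < T ω} := fun t => by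
    simpa using hT.measurableSet_gt t
  have hA' : ∀ t, MeasurableSet (A (t + 1)) := fun t => ℱ.le _ _ (hA (t + 1) t.succ_pos)
  have hT_eq : ∫⁻ ω, (T ω : ℝ≥0∞) ∂P = ∑' t, P {ω | t < T ω} := by
    simpa using lintegral_sum_range_eq_tsum_setLIntegral P T (fun t => ℱ.le t _ (hlt t))
      (fun _ _ => 1) fun _ => measurable_const
  have hpulls_eq : ∫⁻ ω, ∑ t ∈ Icc 1 (T ω), (A t).indicator (fun _ => (1 : ℝ≥0∞)) ω ∂P =
      ∑' t, P (A (t + 1) ∩ {ω | t < T ω}) := by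
    simp_rw [sum_Icc_one_eq_sum_range]
    rw [lintegral_sum_range_eq_tsum_setLIntegral P T (fun t => ℱ.le t _ (hlt t))
      (fun t => (A (t + 1)).indicator fun _ => 1) fun t => measurable_const.indicator (hA' t)]
    simp_rw [lintegral_indicator_const (hA' _), one_mul, Measure.restrict_apply (hA' _)]
  rw [hT_eq, hpulls_eq, ← ENNReal.tsum_mul_left]
  refine ENNReal.tsum_le_tsum fun t => ?_
  refine ofReal_mul_measure_le_measure_inter_of_le_condExp (ℱ.le t) P (hA' t) (hlt t) ?_
  filter_upwards [hcond (t + 1) t.succ_pos] with ω hω hωt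
  simpa using hω hωt

end

theorem stmt_13_general {Ω : Type*} {m0 : MeasurableSpace Ω} (P : Measure Ω) [IsProbabilityMeasure P]
    (K M : ℕ) (hKM : M ≤ K)
    (μ ε α : ℝ)
    (ℱ : Filtration ℕ m0) (T : Ω → ℕ)
    (hT : IsStoppingTime ℱ (fun ω => (T ω : WithTop ℕ)))
    (A : ℕ → Set Ω)
    (hA : ∀ t : ℕ, 1 ≤ t → MeasurableSet[ℱ t] (A t))
    (hcond : ∀ t : ℕ, 1 ≤ t →
      ∀ᵐ ω ∂P, t ≤ T ω →
        1 / ((K : ℝ) - M + 1) ≤ (P[(A t).indicator (fun _ => (1 : ℝ)) | ℱ (t - 1)]) ω)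
    (hpulls : ∫⁻ ω, ∑ t ∈ Icc 1 (T ω), (A t).indicator (fun _ => (1 : ℝ≥0∞)) ω ∂P ≤
      ENNReal.ofReal ((M : ℝ) * (1 + Real.log (1 / α) /
        (μ * Real.log (μ / (μ - ε)) + (1 - μ) * Real.log ((1 - μ) / (1 - μ + ε)))))) :
    ∫⁻ ω, (T ω : ℝ≥0∞) ∂P ≤
      ENNReal.ofReal ((M : ℝ) * ((K : ℝ) - M + 1) * (1 + Real.log (1 / α) /
        (μ * Real.log (μ / (μ - ε)) + (1 - μ) * Real.log ((1 - μ) / (1 - μ + ε))))) := by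
  set c := 1 + Real.log (1 / α) /
    (μ * Real.log (μ / (μ - ε)) + (1 - μ) * Real.log ((1 - μ) / (1 - μ + ε)))
  set q := (K : ℝ) - M + 1
  have hq : 0 < q := by
    have : (M : ℝ) ≤ K := by exact_mod_cast hKM
    linarith
  have hT_le_pulls := ofReal_mul_lintegral_le_lintegral_sum_indicator P ℱ T hT A hA hcond
  calc ∫⁻ ω, (T ω : ℝ≥0∞) ∂P
      = ENNReal.ofReal q * (ENNReal.ofReal (1 / q) * ∫⁻ ω, (T ω : ℝ≥0∞) ∂P) := by
        rw [← mul_assoc, ← ENNReal.ofReal_mul hq.le, mul_one_div_cancel hq.ne', ENNReal.ofReal_one,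
          one_mul]
    _ ≤ ENNReal.ofReal q * ENNReal.ofReal (M * c) := by gcongr; exact hT_le_pulls.trans hpulls
    _ = ENNReal.ofReal (M * q * c) := by
        rw [← ENNReal.ofReal_mul hq.le]
        ring_nf

/-- Abstract form of Theorem 4 (relaxed inspector): if at every step before the stopping time
`T` an unsafe machine is sampled with conditional probability at least `1/(K−M+1)`, and the
expected number of unsafe-machine pulls up to `T` is at most `M·(1 + log(1/α)/kl(μ, μ−ε))`,
then `E[T] ≤ M·(K−M+1)·(1 + log(1/α)/kl(μ, μ−ε))`. -/
theorem stmt_13 {Ω : Type*} {m0 : MeasurableSpace Ω} (P : Measure Ω) [IsProbabilityMeasure P]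
    (K M : ℕ) (hM : 1 ≤ M) (hKM : M ≤ K)
    (μ ε α : ℝ) (hε : 0 < ε) (hμε : 0 < μ - ε) (hμ : μ < 1)
    (hα : α ∈ Set.Ioo (0 : ℝ) 1)
    (ℱ : Filtration ℕ m0) (T : Ω → ℕ)
    (hT : IsStoppingTime ℱ (fun ω => (T ω : WithTop ℕ)))
    (hTint : ∫⁻ ω, (T ω : ℝ≥0∞) ∂P < ⊤)
    (A : ℕ → Set Ω)
    (hA : ∀ t : ℕ, 1 ≤ t → MeasurableSet[ℱ t] (A t))
    (hcond : ∀ t : ℕ, 1 ≤ t →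
      ∀ᵐ ω ∂P, t ≤ T ω →
        1 / ((K : ℝ) - M + 1) ≤ (P[(A t).indicator (fun _ => (1 : ℝ)) | ℱ (t - 1)]) ω)
    (hpulls : ∫⁻ ω, ∑ t ∈ Icc 1 (T ω), (A t).indicator (fun _ => (1 : ℝ≥0∞)) ω ∂P ≤
      ENNReal.ofReal ((M : ℝ) * (1 + Real.log (1 / α) /
        (μ * Real.log (μ / (μ - ε)) + (1 - μ) * Real.log ((1 - μ) / (1 - μ + ε)))))) :
    ∫⁻ ω, (T ω : ℝ≥0∞) ∂P ≤
      ENNReal.ofReal ((M : ℝ) * ((K : ℝ) - M + 1) * (1 + Real.log (1 / α) /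
        (μ * Real.log (μ / (μ - ε)) + (1 - μ) * Real.log ((1 - μ) / (1 - μ + ε))))) :=
  stmt_13_general P K M hKM μ ε α ℱ T hT A hA hcond hpulls
end
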